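/- arXiv:1208.6148 — 2 statements merged into one kernel-verified Lean document; each statement's English description precedes it below -/
import Mathlib

section
/- Let F : (0,∞) → ℝ be defined by F(λ) = λ^p for λ ∈ (0,1], where p > 0. Let b : (0,∞) → (0,∞) with b(t) → ∞, and let ε : (0,∞) → (0,1) solve −log F(ε(t))/ε(t) = b(t) for all large t. Then ε(t) → 0 and log F(ε(t)) ∼ −p·log b(t) as t → ∞. -/
/-!
With `L = -log ε`, the defining equation reads `b = p L e^L`, i.e.
`log b = log p + log L + L`. Since `log L ≤ L`, this forces `L → ∞`, so `ε = e^{-L} → 0`,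
and `log F(ε) / (-p log b) = L / (log p + log L + L) → 1` because `log L = o(L)`.
-/

open Filter Real Asymptotics Topology

lemma isEquivalent_const_add_log_add_self (c : ℝ) :
    (fun y => c + log y + y) ~[atTop] id := by
  have h := (IsEquivalent.refl (u := id) (l := atTop)).add_isLittleO
    ((isLittleO_const_id_atTop c).add isLittleO_log_id_atTop)
  refine h.congr_left (Eventually.of_forall fun y => ?_)
  simp only [Pi.add_apply, id]
  ring

lemma tendsto_div_const_add_log_add_self (c : ℝ) :
    Tendsto (fun y => y / (c + log y + y)) atTop (𝓝 1) := by
  have hne : ∀ᶠ y in atTop, c + log y + y ≠ 0 :=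
    ((isEquivalent_const_add_log_add_self c).symm.tendsto_atTop tendsto_id).eventually_ne_atTop 0
  exact (isEquivalent_iff_tendsto_one hne).mp (isEquivalent_const_add_log_add_self c).symm

lemma tendsto_atTop_of_tendsto_const_add_log_add_self {α : Type*} {l : Filter α} {c : ℝ}
    {L : α → ℝ} (hpos : ∀ᶠ x in l, 0 < L x)
    (h : Tendsto (fun x => c + log (L x) + L x) l atTop) : Tendsto L l atTop := by
  refine tendsto_atTop_mono' l ?_
    ((h.atTop_add (tendsto_const_nhds (x := -c))).atTop_div_const two_pos)
  filter_upwards [hpos] with x hx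
  linarith [log_le_sub_one_of_pos hx]

lemma log_neg_log_rpow_div {ε : ℝ} (p : ℝ) (hp : p ≠ 0) (hε₀ : 0 < ε) (hε₁ : ε < 1) :
    log (-log (ε ^ p) / ε) = log p + log (-log ε) + -log ε := by
  have hlog : log ε < 0 := log_neg hε₀ hε₁
  rw [log_rpow hε₀, ← mul_neg, log_div (mul_ne_zero hp (by linarith)) hε₀.ne',
    log_mul hp (by linarith)]
  ring

theorem power_law_epsilon_asymptotics_general
    (p : ℝ) (hp : 0 < p)
    (b eps : ℝ → ℝ)
    (hb : Tendsto b atTop atTop)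
    (heq : ∀ᶠ t in atTop, eps t ∈ Set.Ioo (0:ℝ) 1 ∧
      -Real.log ((eps t) ^ p) / eps t = b t) :
    Tendsto eps atTop (nhds 0) ∧
    Tendsto (fun t => Real.log ((eps t) ^ p) / (-(p * Real.log (b t))))
      atTop (nhds 1) := by
  set L := fun t => -log (eps t)
  have hlogb : ∀ᶠ t in atTop,
      eps t ∈ Set.Ioo (0:ℝ) 1 ∧ log (b t) = log p + log (L t) + L t := by
    filter_upwards [heq] with t ⟨hmem, hbt⟩
    exact ⟨hmem, hbt ▸ log_neg_log_rpow_div p hp.ne' hmem.1 hmem.2⟩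
  have hL : Tendsto L atTop atTop := by
    refine tendsto_atTop_of_tendsto_const_add_log_add_self (c := log p) ?_
      ((tendsto_log_atTop.comp hb).congr' ?_)
    · filter_upwards [hlogb] with t ⟨hmem, _⟩
      exact neg_pos.mpr (log_neg hmem.1 hmem.2)
    · filter_upwards [hlogb] with t ⟨_, ht⟩
      exact ht
  constructor
  · refine (tendsto_exp_atBot.comp (tendsto_neg_atTop_atBot.comp hL)).congr' ?_
    filter_upwards [hlogb] with t ⟨hmem, _⟩
    simp [L, exp_log hmem.1]
  · refine ((tendsto_div_const_add_log_add_self (log p)).comp hL).congr' ?_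
    filter_upwards [hlogb] with t ⟨hmem, ht⟩
    rw [Function.comp_apply, ← ht, log_rpow hmem.1, neg_mul_eq_mul_neg,
      mul_div_mul_left _ _ hp.ne', div_neg, neg_div]

/-- If F(λ) = λ^p on (0,1], b(t) → ∞, and ε(t) ∈ (0,1) solves
−log F(ε(t))/ε(t) = b(t), then ε(t) → 0 and log F(ε(t)) ∼ −p·log b(t). -/
theorem power_law_epsilon_asymptotics
    (p : ℝ) (hp : 0 < p)
    (b eps : ℝ → ℝ)
    (hb : Tendsto b atTop atTop)
    (hbpos : ∀ t > (0:ℝ), 0 < b t)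
    (heq : ∀ᶠ t in atTop, eps t ∈ Set.Ioo (0:ℝ) 1 ∧
      -Real.log ((eps t) ^ p) / eps t = b t) :
    Tendsto eps atTop (nhds 0) ∧
    Tendsto (fun t => Real.log ((eps t) ^ p) / (-(p * Real.log (b t))))
      atTop (nhds 1) :=
  power_law_epsilon_asymptotics_general p hp b eps hb heq
end

section
/- Let F(λ) = (−log λ)^{−p} for λ ∈ (0, e^{−1}], where p > 0. Let b : (0,∞) → (0,∞) with b(t) → ∞, and let ε : (0,∞) → (0, e^{−1}) solve −log F(ε(t))/ε(t) = b(t) for all large t. Then log F(ε(t)) ∼ −p·log log b(t) as t → ∞. -/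
open Filter Real Asymptotics

/-!
Put `u = -log ε`. The equation says `b = p · log u · eᵘ`, so `log b = u + log p + log log u`,
which is `u` up to a term of order `log log u = o(u)`. Hence `log b ~ u`, and taking logarithms
once more, `log log b ~ log u = -(1/p) · log F(ε)`.
-/

theorem one_lt_neg_log_of_mem_Ioo {ε : ℝ} (hε : ε ∈ Set.Ioo 0 (exp (-1))) : 1 < -log ε := by
  have := log_lt_log hε.1 hε.2
  rw [log_exp] at this
  linarith

theorem log_eq_of_neg_log_rpow_div_eq {p ε b : ℝ} (hp : 0 < p) (hε : 0 < ε) (hu : 1 < -log ε)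
    (h : -log ((-log ε) ^ (-p)) / ε = b) :
    log b = -log ε + log p + log (log (-log ε)) := by
  have hloglog : 0 < log (-log ε) := log_pos hu
  subst h
  rw [log_rpow (by linarith), neg_mul, neg_neg,
    log_div (by positivity) hε.ne', log_mul hp.ne' hloglog.ne']
  ring

section EqAddLogLog

variable {α : Type*} {l : Filter α} {u v : α → ℝ} {c : ℝ}

theorem tendsto_atTop_of_eq_add_log_log (hu : ∀ᶠ x in l, 1 < u x) (hv : Tendsto v l atTop)
    (huv : ∀ᶠ x in l, v x = u x + c + log (log (u x))) : Tendsto u l atTop := by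
  have hlower : ∀ᶠ x in l, (v x - c) / 2 ≤ u x := by
    filter_upwards [hu, huv] with x hx hvx
    have hlog : log (log (u x)) ≤ u x :=
      calc log (log (u x)) ≤ log (u x) := log_le_self (log_nonneg hx.le)
        _ ≤ u x := log_le_self (by linarith)
    linarith
  exact tendsto_atTop_mono' l hlower ((tendsto_atTop_add_const_right l (-c) hv).atTop_div_const
    two_pos |>.congr fun x => by ring_nf)

theorem isEquivalent_of_eq_add_log_log (hu : ∀ᶠ x in l, 1 < u x) (hv : Tendsto v l atTop)
    (huv : ∀ᶠ x in l, v x = u x + c + log (log (u x))) : u ~[l] v := by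
  have hu_top := tendsto_atTop_of_eq_add_log_log hu hv huv
  have hloglog : (fun y => c + log (log y)) =o[atTop] id :=
    (isLittleO_const_id_atTop c).add
      ((isLittleO_log_id_atTop.comp_tendsto tendsto_log_atTop).trans isLittleO_log_id_atTop)
  have hvu : v ~[l] u :=
    IsEquivalent.refl.add_isLittleO (hloglog.comp_tendsto hu_top) |>.congr_left <| by
      filter_upwards [huv] with x hx
      simp only [Pi.add_apply, Function.comp_apply, id, hx]
      ring
  exact hvu.symm

end EqAddLogLog

theorem log_law_epsilon_asymptotics_general
    (p : ℝ) (hp : 0 < p)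
    (b eps : ℝ → ℝ)
    (hb : Tendsto b atTop atTop)
    (heq : ∀ᶠ t in atTop, eps t ∈ Set.Ioo (0:ℝ) (Real.exp (-1)) ∧
      -Real.log ((-Real.log (eps t)) ^ (-p)) / eps t = b t) :
    Tendsto (fun t =>
        Real.log ((-Real.log (eps t)) ^ (-p)) / (-(p * Real.log (Real.log (b t)))))
      atTop (nhds 1) := by
  have hu : ∀ᶠ t in atTop, 1 < -log (eps t) :=
    heq.mono fun t ht => one_lt_neg_log_of_mem_Ioo ht.1
  have hlogb : ∀ᶠ t in atTop, log (b t) = -log (eps t) + log p + log (log (-log (eps t))) := by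
    filter_upwards [heq, hu] with t ht htu
    exact log_eq_of_neg_log_rpow_div_eq hp ht.1.1 htu ht.2
  have hlogb_top : Tendsto (fun t => log (b t)) atTop atTop := tendsto_log_atTop.comp hb
  have hequiv : (fun t => log (-log (eps t))) ~[atTop] fun t => log (log (b t)) :=
    (isEquivalent_of_eq_add_log_log hu hlogb_top hlogb).log hlogb_top
  have hloglogb_ne : ∀ᶠ t in atTop, log (log (b t)) ≠ 0 :=
    (tendsto_log_atTop.comp hlogb_top).eventually_ne_atTop 0
  refine ((isEquivalent_iff_tendsto_one hloglogb_ne).mp hequiv).congr' ?_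
  filter_upwards [hu] with t ht
  rw [Pi.div_apply, log_rpow (by linarith), neg_mul, neg_div_neg_eq, mul_div_mul_left _ _ hp.ne']

/-- If F(λ) = (−log λ)^(−p) on (0, e⁻¹], b(t) → ∞, and ε(t) ∈ (0, e⁻¹) solves
−log F(ε(t))/ε(t) = b(t), then log F(ε(t)) ∼ −p·log log b(t). -/
theorem log_law_epsilon_asymptotics
    (p : ℝ) (hp : 0 < p)
    (b eps : ℝ → ℝ)
    (hb : Tendsto b atTop atTop)
    (hbpos : ∀ t > (0:ℝ), 0 < b t)
    (heq : ∀ᶠ t in atTop, eps t ∈ Set.Ioo (0:ℝ) (Real.exp (-1)) ∧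
      -Real.log ((-Real.log (eps t)) ^ (-p)) / eps t = b t) :
    Tendsto (fun t =>
        Real.log ((-Real.log (eps t)) ^ (-p)) / (-(p * Real.log (Real.log (b t)))))
      atTop (nhds 1) :=
  log_law_epsilon_asymptotics_general p hp b eps hb heq
end
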